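/- Let n ≥ 2 be a natural number and let z > 0, v ≥ 0, δ₁, δ₂ be real numbers satisfying (n−1)·v·δ₁ ≥ (n² − (n−1)²v²)·z and n·δ₂ ≥ −(n−1)·v·z. Let Λ be the symmetric (n+n²)×(n+n²) real block matrix Λ = [[A, B],[Bᵀ, C]], where A = (nδ₁ + (n−1)nvz)·Iₙ − δ₁·Jₙ (Iₙ the n×n identity, Jₙ the n×n all-ones matrix); B is the n×n² matrix with entry in row i, column j equal to (n−1)z if i = ⌈j/n⌉ and −z otherwise; and C is the block-diagonal n²×n² matrix consisting of n copies of C₀ = (nδ₂ + (n−1)vz)·Iₙ − δ₂·Jₙ along the diagonal. Then Λ is positive semidefinite. -/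

import Mathlib

/-- Expansion of `∑ (N f - S)²`. -/
lemma stmt13_expand1 (n : ℕ) (N S : ℝ) (hN : N = (n : ℝ)) (f : Fin n → ℝ)
    (hS : S = ∑ i, f i) :
    ∑ k, (N * f k - S) ^ 2 = N ^ 2 * (∑ k, (f k) ^ 2) - N * S ^ 2 := by
  have h : ∀ k : Fin n, (N * f k - S) ^ 2
      = N ^ 2 * (f k) ^ 2 - 2 * N * S * f k + S ^ 2 := fun k => by ring
  rw [Finset.sum_congr rfl fun k _ => h k]
  simp only [Finset.sum_add_distrib, Finset.sum_sub_distrib, ← Finset.mul_sum,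
    Finset.sum_const, Finset.card_univ, Fintype.card_fin, nsmul_eq_mul]
  rw [← hS, ← hN]
  ring

/-- Expansion of `∑ (w g + N (N f - S))²`. -/
lemma stmt13_expand2 (n : ℕ) (N S w : ℝ) (hN : N = (n : ℝ)) (f g : Fin n → ℝ)
    (hS : S = ∑ i, f i) :
    ∑ k, (w * g k + N * (N * f k - S)) ^ 2
      = w ^ 2 * (∑ k, (g k) ^ 2) + 2 * N ^ 2 * w * (∑ k, f k * g k)
        - 2 * N * w * S * (∑ k, g k) + N ^ 4 * (∑ k, (f k) ^ 2) - N ^ 3 * S ^ 2 := by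
  have h : ∀ k : Fin n, (w * g k + N * (N * f k - S)) ^ 2
      = w ^ 2 * (g k) ^ 2 + 2 * N ^ 2 * w * (f k * g k) - 2 * N * w * S * g k
        + N ^ 4 * (f k) ^ 2 - 2 * N ^ 3 * S * f k + N ^ 2 * S ^ 2 := fun k => by ring
  rw [Finset.sum_congr rfl fun k _ => h k]
  simp only [Finset.sum_add_distrib, Finset.sum_sub_distrib, ← Finset.mul_sum,
    Finset.sum_const, Finset.card_univ, Fintype.card_fin, nsmul_eq_mul]
  rw [← hS, ← hN]
  ring

/-- The purely algebraic core inequality. -/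
lemma stmt13_core (N z w δ₁ δ₂ S TT X2 P1 P2 Y2 U V W : ℝ)
    (hN : 2 ≤ N) (hz : 0 < z) (hw : 0 < w)
    (hA0 : 0 ≤ w * δ₁ + w ^ 2 * z - N ^ 2 * z) (hc0 : 0 ≤ N * δ₂ + w * z)
    (hU0 : 0 ≤ U) (hV0 : 0 ≤ V) (hW0 : 0 ≤ W)
    (hU : U = N ^ 2 * X2 - N * S ^ 2)
    (hV : V = w ^ 2 * P2 + 2 * N ^ 2 * w * P1 - 2 * N * w * S * TT + N ^ 4 * X2 - N ^ 3 * S ^ 2)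
    (hW : W = N ^ 2 * Y2 - N * P2) :
    0 ≤ (N * δ₁ + w * N * z) * X2 - δ₁ * S ^ 2 + 2 * N * z * P1 - 2 * z * S * TT
      + (N * δ₂ + w * z) * Y2 - δ₂ * P2 := by
  have key : N ^ 2 * w * ((N * δ₁ + w * N * z) * X2 - δ₁ * S ^ 2 + 2 * N * z * P1
        - 2 * z * S * TT + (N * δ₂ + w * z) * Y2 - δ₂ * P2)
      = N * (w * δ₁ + w ^ 2 * z - N ^ 2 * z) * U + N * z * V + N ^ 2 * w ^ 2 * z * S ^ 2
        + (w * (N * δ₂ + w * z)) * W := by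
    rw [hU, hV, hW]; ring
  have hR : 0 ≤ N * (w * δ₁ + w ^ 2 * z - N ^ 2 * z) * U + N * z * V
      + N ^ 2 * w ^ 2 * z * S ^ 2 + (w * (N * δ₂ + w * z)) * W := by
    have t1 : 0 ≤ N * (w * δ₁ + w ^ 2 * z - N ^ 2 * z) * U :=
      mul_nonneg (mul_nonneg (by linarith) hA0) hU0
    have t2 : 0 ≤ N * z * V := mul_nonneg (mul_nonneg (by linarith) hz.le) hV0
    have t3 : 0 ≤ N ^ 2 * w ^ 2 * z * S ^ 2 :=
      mul_nonneg (mul_nonneg (mul_nonneg (sq_nonneg N) (sq_nonneg w)) hz.le) (sq_nonneg S)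
    have t4 : 0 ≤ (w * (N * δ₂ + w * z)) * W := mul_nonneg (mul_nonneg hw.le hc0) hW0
    linarith
  have hNw : 0 < N ^ 2 * w := by positivity
  by_contra hneg
  push_neg at hneg
  have hlt : N ^ 2 * w * ((N * δ₁ + w * N * z) * X2 - δ₁ * S ^ 2 + 2 * N * z * P1
      - 2 * z * S * TT + (N * δ₂ + w * z) * Y2 - δ₂ * P2) < 0 :=
    mul_neg_of_pos_of_neg hNw hneg
  rw [key] at hlt
  linarith

theorem stmt_13 (n : ℕ) (hn : 2 ≤ n) (z v δ₁ δ₂ : ℝ)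
    (hz : 0 < z) (hv : 0 ≤ v)
    (h1 : (((n : ℝ) - 1) * v) * δ₁ ≥ ((n : ℝ) ^ 2 - ((n : ℝ) - 1) ^ 2 * v ^ 2) * z)
    (h2 : (n : ℝ) * δ₂ ≥ -(((n : ℝ) - 1) * v * z)) :
    let A : Matrix (Fin n) (Fin n) ℝ :=
      Matrix.of fun i j =>
        (if i = j then (n : ℝ) * δ₁ + ((n : ℝ) - 1) * (n : ℝ) * v * z else 0) - δ₁
    let B : Matrix (Fin n) (Fin n × Fin n) ℝ :=
      Matrix.of fun i p => if i = p.1 then ((n : ℝ) - 1) * z else -z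
    let C : Matrix (Fin n × Fin n) (Fin n × Fin n) ℝ :=
      Matrix.of fun p q =>
        if p.1 = q.1 then
          (if p.2 = q.2 then (n : ℝ) * δ₂ + ((n : ℝ) - 1) * v * z else 0) - δ₂
        else 0
    (Matrix.fromBlocks A B B.transpose C).PosSemidef := by
  intro A B C
  have hA : ∀ i j, A i j
      = (if i = j then (n : ℝ) * δ₁ + ((n : ℝ) - 1) * (n : ℝ) * v * z else 0) - δ₁ :=
    fun i j => rfl
  have hB : ∀ i p, B i p = if i = p.1 then ((n : ℝ) - 1) * z else -z := fun i p => rfl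
  have hC : ∀ p q, C p q = if p.1 = q.1 then
      ((if p.2 = q.2 then (n : ℝ) * δ₂ + ((n : ℝ) - 1) * v * z else 0) - δ₂) else 0 :=
    fun p q => rfl
  have hN2 : (2 : ℝ) ≤ (n : ℝ) := by exact_mod_cast hn
  have hw0 : 0 ≤ ((n : ℝ) - 1) * v := mul_nonneg (by linarith) hv
  have hww : ((n : ℝ) - 1) ^ 2 * v ^ 2 = (((n : ℝ) - 1) * v) ^ 2 := by ring
  rw [hww] at h1
  have hw : 0 < ((n : ℝ) - 1) * v := by
    rcases hw0.eq_or_lt with h | h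
    · exfalso; rw [← h] at h1; nlinarith
    · exact h
  have hA0 : 0 ≤ (((n : ℝ) - 1) * v) * δ₁ + (((n : ℝ) - 1) * v) ^ 2 * z - (n : ℝ) ^ 2 * z := by
    nlinarith [h1]
  have hc0 : 0 ≤ (n : ℝ) * δ₂ + (((n : ℝ) - 1) * v) * z := by
    have : (((n : ℝ) - 1) * v) * z = ((n : ℝ) - 1) * v * z := by ring
    linarith [h2]
  rw [Matrix.posSemidef_iff_dotProduct_mulVec]
  constructor
  · -- Hermitian
    ext p q
    rcases p with i | p <;> rcases q with j | q <;>
      simp only [Matrix.conjTranspose_apply, Matrix.fromBlocks_apply₁₁, Matrix.fromBlocks_apply₁₂,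
        Matrix.fromBlocks_apply₂₁, Matrix.fromBlocks_apply₂₂, Matrix.transpose_apply,
        hA, hB, hC, star_trivial]
    · rcases eq_or_ne i j with h | h
      · simp [h]
      · simp [h, h.symm]
    · rcases eq_or_ne p.1 q.1 with h | h
      · rcases eq_or_ne p.2 q.2 with h' | h'
        · simp [h, h']
        · simp [h, h', h'.symm]
      · simp [h, h.symm]
  · -- quadratic form
    intro u
    obtain ⟨S, hS⟩ : ∃ S : ℝ, S = ∑ i, u (Sum.inl i) := ⟨_, rfl⟩
    obtain ⟨X2, hX2⟩ : ∃ X2 : ℝ, X2 = ∑ i, (u (Sum.inl i)) ^ 2 := ⟨_, rfl⟩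
    obtain ⟨T, hT⟩ : ∃ T : Fin n → ℝ, ∀ k, T k = ∑ j, u (Sum.inr (k, j)) := ⟨_, fun k => rfl⟩
    obtain ⟨TT, hTT⟩ : ∃ TT : ℝ, TT = ∑ k, T k := ⟨_, rfl⟩
    obtain ⟨P1, hP1⟩ : ∃ P1 : ℝ, P1 = ∑ k, u (Sum.inl k) * T k := ⟨_, rfl⟩
    obtain ⟨P2, hP2⟩ : ∃ P2 : ℝ, P2 = ∑ k, (T k) ^ 2 := ⟨_, rfl⟩
    obtain ⟨Y2, hY2⟩ : ∃ Y2 : ℝ, Y2 = ∑ k, ∑ j, (u (Sum.inr (k, j))) ^ 2 := ⟨_, rfl⟩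
    set M := Matrix.fromBlocks A B B.transpose C with hM
    have hm1 : ∀ i, (M.mulVec u) (Sum.inl i)
        = (((n : ℝ) * δ₁ + (((n : ℝ) - 1) * v) * (n : ℝ) * z) * u (Sum.inl i) - δ₁ * S)
          + ((n : ℝ) * z * T i - z * TT) := by
      intro i
      show (∑ q, M (Sum.inl i) q * u q) = _
      rw [Fintype.sum_sum_type]
      have e1 : (∑ j, M (Sum.inl i) (Sum.inl j) * u (Sum.inl j))
          = ((n : ℝ) * δ₁ + (((n : ℝ) - 1) * v) * (n : ℝ) * z) * u (Sum.inl i) - δ₁ * S := by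
        simp only [hM, Matrix.fromBlocks_apply₁₁, hA]
        have estep : ∀ j, ((if i = j then (n : ℝ) * δ₁ + ((n : ℝ) - 1) * (n : ℝ) * v * z else 0)
              - δ₁) * u (Sum.inl j)
            = (if i = j then ((n : ℝ) * δ₁ + (((n : ℝ) - 1) * v) * (n : ℝ) * z) * u (Sum.inl j)
                else 0) - δ₁ * u (Sum.inl j) := by
          intro j; split_ifs <;> ring
        rw [Finset.sum_congr rfl fun j _ => estep j, Finset.sum_sub_distrib,
          Finset.sum_ite_eq, ← Finset.mul_sum, ← hS]
        simp
      have e2 : (∑ p : Fin n × Fin n, M (Sum.inl i) (Sum.inr p) * u (Sum.inr p))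
          = (n : ℝ) * z * T i - z * TT := by
        simp only [hM, Matrix.fromBlocks_apply₁₂, hB]
        rw [Fintype.sum_prod_type]
        have estep : ∀ k, (∑ j, (if i = (k, j).1 then ((n : ℝ) - 1) * z else -z)
              * u (Sum.inr (k, j)))
            = (if i = k then (n : ℝ) * z * T k else 0) - z * T k := by
          intro k
          have e3 : ∀ j, (if i = (k, j).1 then ((n : ℝ) - 1) * z else -z) * u (Sum.inr (k, j))
              = (if i = k then (n : ℝ) * z else 0) * u (Sum.inr (k, j))
                - z * u (Sum.inr (k, j)) := by
            intro j; split_ifs <;> ring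
          rw [Finset.sum_congr rfl fun j _ => e3 j, Finset.sum_sub_distrib, ← Finset.mul_sum,
            ← Finset.mul_sum, ← hT k]
          split_ifs <;> simp
        rw [Finset.sum_congr rfl fun k _ => estep k, Finset.sum_sub_distrib,
          Finset.sum_ite_eq, ← Finset.mul_sum, ← hTT]
        simp
      rw [e1, e2]
    have hm2 : ∀ p : Fin n × Fin n, (M.mulVec u) (Sum.inr p)
        = ((n : ℝ) * z * u (Sum.inl p.1) - z * S)
          + (((n : ℝ) * δ₂ + (((n : ℝ) - 1) * v) * z) * u (Sum.inr p) - δ₂ * T p.1) := by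
      intro p
      show (∑ q, M (Sum.inr p) q * u q) = _
      rw [Fintype.sum_sum_type]
      have e1 : (∑ i, M (Sum.inr p) (Sum.inl i) * u (Sum.inl i))
          = (n : ℝ) * z * u (Sum.inl p.1) - z * S := by
        simp only [hM, Matrix.fromBlocks_apply₂₁, Matrix.transpose_apply, hB]
        have estep : ∀ i, (if i = p.1 then ((n : ℝ) - 1) * z else -z) * u (Sum.inl i)
            = (if i = p.1 then (n : ℝ) * z * u (Sum.inl i) else 0) - z * u (Sum.inl i) := by
          intro i; split_ifs <;> ring
        rw [Finset.sum_congr rfl fun i _ => estep i, Finset.sum_sub_distrib,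
          Finset.sum_ite_eq', ← Finset.mul_sum, ← hS]
        simp
      have e2 : (∑ q : Fin n × Fin n, M (Sum.inr p) (Sum.inr q) * u (Sum.inr q))
          = ((n : ℝ) * δ₂ + (((n : ℝ) - 1) * v) * z) * u (Sum.inr p) - δ₂ * T p.1 := by
        simp only [hM, Matrix.fromBlocks_apply₂₂, hC]
        rw [Fintype.sum_prod_type]
        have estep : ∀ l, (∑ m, (if p.1 = (l, m).1 then
              ((if p.2 = (l, m).2 then (n : ℝ) * δ₂ + ((n : ℝ) - 1) * v * z else 0) - δ₂) else 0)
              * u (Sum.inr (l, m)))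
            = if p.1 = l then
                (((n : ℝ) * δ₂ + (((n : ℝ) - 1) * v) * z) * u (Sum.inr (l, p.2)) - δ₂ * T l)
              else 0 := by
          intro l
          rcases eq_or_ne p.1 l with h | h
          · rw [if_pos h]
            have e3 : ∀ m, (if p.1 = (l, m).1 then
                  ((if p.2 = (l, m).2 then (n : ℝ) * δ₂ + ((n : ℝ) - 1) * v * z else 0) - δ₂)
                  else 0) * u (Sum.inr (l, m))
                = (if p.2 = m then
                    ((n : ℝ) * δ₂ + (((n : ℝ) - 1) * v) * z) * u (Sum.inr (l, m)) else 0)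
                  - δ₂ * u (Sum.inr (l, m)) := by
              intro m
              simp only [h, if_pos rfl]
              split_ifs <;> ring
            rw [Finset.sum_congr rfl fun m _ => e3 m, Finset.sum_sub_distrib,
              Finset.sum_ite_eq, ← Finset.mul_sum, ← hT l]
            simp
          · rw [if_neg h]
            apply Finset.sum_eq_zero
            intro m _
            rw [if_neg h, zero_mul]
        rw [Finset.sum_congr rfl fun l _ => estep l, Finset.sum_ite_eq]
        simp
      rw [e1, e2]
    have hstar : star u = u := funext fun p => star_trivial _
    have hQ : dotProduct (star u) (M.mulVec u)
        = ((n : ℝ) * δ₁ + (((n : ℝ) - 1) * v) * (n : ℝ) * z) * X2 - δ₁ * S ^ 2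
          + 2 * (n : ℝ) * z * P1 - 2 * z * S * TT
          + ((n : ℝ) * δ₂ + (((n : ℝ) - 1) * v) * z) * Y2 - δ₂ * P2 := by
      rw [hstar]
      show (∑ p, u p * (M.mulVec u) p) = _
      rw [Fintype.sum_sum_type]
      have q1 : (∑ i, u (Sum.inl i) * (M.mulVec u) (Sum.inl i))
          = ((n : ℝ) * δ₁ + (((n : ℝ) - 1) * v) * (n : ℝ) * z) * X2 - δ₁ * S * S
            + (n : ℝ) * z * P1 - z * TT * S := by
        have estep : ∀ i, u (Sum.inl i) * (M.mulVec u) (Sum.inl i)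
            = ((n : ℝ) * δ₁ + (((n : ℝ) - 1) * v) * (n : ℝ) * z) * (u (Sum.inl i)) ^ 2
              - δ₁ * S * u (Sum.inl i) + (n : ℝ) * z * (u (Sum.inl i) * T i)
              - z * TT * u (Sum.inl i) := by
          intro i; rw [hm1 i]; ring
        rw [Finset.sum_congr rfl fun i _ => estep i, Finset.sum_sub_distrib,
          Finset.sum_add_distrib, Finset.sum_sub_distrib, ← Finset.mul_sum, ← Finset.mul_sum,
          ← Finset.mul_sum, ← Finset.mul_sum, ← hX2, ← hS, ← hP1]
      have q2 : (∑ p : Fin n × Fin n, u (Sum.inr p) * (M.mulVec u) (Sum.inr p))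
          = (n : ℝ) * z * P1 - z * S * TT
            + ((n : ℝ) * δ₂ + (((n : ℝ) - 1) * v) * z) * Y2 - δ₂ * P2 := by
        rw [Fintype.sum_prod_type]
        have hin : ∀ k, (∑ j, u (Sum.inr (k, j)) * (M.mulVec u) (Sum.inr (k, j)))
            = (n : ℝ) * z * (u (Sum.inl k) * T k) - z * S * T k
              + ((n : ℝ) * δ₂ + (((n : ℝ) - 1) * v) * z) * (∑ j, (u (Sum.inr (k, j))) ^ 2)
              - δ₂ * (T k) ^ 2 := by
          intro k
          have estep : ∀ j, u (Sum.inr (k, j)) * (M.mulVec u) (Sum.inr (k, j))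
              = ((n : ℝ) * z * u (Sum.inl k) - z * S) * u (Sum.inr (k, j))
                + ((n : ℝ) * δ₂ + (((n : ℝ) - 1) * v) * z) * (u (Sum.inr (k, j))) ^ 2
                - δ₂ * T k * u (Sum.inr (k, j)) := by
            intro j; rw [hm2 (k, j)]; ring
          rw [Finset.sum_congr rfl fun j _ => estep j, Finset.sum_sub_distrib,
            Finset.sum_add_distrib, ← Finset.mul_sum, ← Finset.mul_sum, ← Finset.mul_sum,
            ← hT k]
          ring
        rw [Finset.sum_congr rfl fun k _ => hin k, Finset.sum_sub_distrib,
          Finset.sum_add_distrib, Finset.sum_sub_distrib, ← Finset.mul_sum, ← Finset.mul_sum,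
          ← Finset.mul_sum, ← Finset.mul_sum, ← hP1, ← hTT, ← hY2, ← hP2]
      rw [q1, q2]
      ring
    rw [hQ]
    have hU : (∑ k, ((n : ℝ) * u (Sum.inl k) - S) ^ 2) = (n : ℝ) ^ 2 * X2 - (n : ℝ) * S ^ 2 := by
      have := stmt13_expand1 n (n : ℝ) S rfl (fun i => u (Sum.inl i)) hS
      rw [this, ← hX2]
    have hWk : ∀ k, (∑ j, ((n : ℝ) * u (Sum.inr (k, j)) - T k) ^ 2)
        = (n : ℝ) ^ 2 * (∑ j, (u (Sum.inr (k, j))) ^ 2) - (n : ℝ) * (T k) ^ 2 :=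
      fun k => stmt13_expand1 n (n : ℝ) (T k) rfl (fun j => u (Sum.inr (k, j))) (hT k)
    have hW : (∑ k, ∑ j, ((n : ℝ) * u (Sum.inr (k, j)) - T k) ^ 2)
        = (n : ℝ) ^ 2 * Y2 - (n : ℝ) * P2 := by
      rw [Finset.sum_congr rfl fun k _ => hWk k, Finset.sum_sub_distrib, ← Finset.mul_sum,
        ← Finset.mul_sum, ← hY2, ← hP2]
    have hV : (∑ k, ((((n : ℝ) - 1) * v) * T k
          + (n : ℝ) * ((n : ℝ) * u (Sum.inl k) - S)) ^ 2)
        = (((n : ℝ) - 1) * v) ^ 2 * P2 + 2 * (n : ℝ) ^ 2 * (((n : ℝ) - 1) * v) * P1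
          - 2 * (n : ℝ) * (((n : ℝ) - 1) * v) * S * TT + (n : ℝ) ^ 4 * X2
          - (n : ℝ) ^ 3 * S ^ 2 := by
      have := stmt13_expand2 n (n : ℝ) S (((n : ℝ) - 1) * v) rfl
        (fun i => u (Sum.inl i)) T hS
      rw [this, ← hP2, ← hP1, ← hTT, ← hX2]
    exact stmt13_core (n : ℝ) z (((n : ℝ) - 1) * v) δ₁ δ₂ S TT X2 P1 P2 Y2 _ _ _ hN2 hz hw
      hA0 hc0
      (Finset.sum_nonneg fun k _ => sq_nonneg _)
      (Finset.sum_nonneg fun k _ => sq_nonneg _)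
      (Finset.sum_nonneg fun k _ => Finset.sum_nonneg fun j _ => sq_nonneg _)
      hU hV hW
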